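/- arXiv:1911.09718 — 5 statements merged into one kernel-verified Lean document; each statement's English description precedes it below -/
import Mathlib

section
/- Let L be a one-dimensional local field with finite residue field F_q, μ a nonzero Haar measure on L, u a uniformizer. The map j : D(L)_{O_L^*} → D_+(Z), sending the class of g to the function n ↦ (1/μ(O_L^*(n))) ∫_{O_L^*(n)} g dμ (with O_L^*(n) = m_L^n \ m_L^{n+1}), is a well-defined isomorphism of C-vector spaces which does not depend on the choice of μ. -/
open Multiplicative MeasureTheory

local notation "ℤₘ₀" => WithZero (Multiplicative ℤ)

/-- The set `D_+(ℤ)` of complex-valued functions on `ℤ` which vanish below some `x₀`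
and are constant above some `x₁`. -/
def DplusSet : Set (ℤ → ℂ) :=
  {c | (∃ x0 : ℤ, ∀ y ≤ x0, c y = 0) ∧ (∃ x1 : ℤ, ∀ x, x1 ≤ x → c (x + 1) = c x)}

/-- `D(L)`: locally constant compactly supported `ℂ`-valued functions on a discretely
valued field `L`, described algebraically. -/
def DL (L : Type*) [Field L] [Valued L ℤₘ₀] : Set (L → ℂ) :=
  {f | (∃ n : ℤ, ∀ x : L, f x ≠ 0 → Valued.v x ≤ ((ofAdd n : Multiplicative ℤ) : ℤₘ₀)) ∧
    ∃ m : ℤ, ∀ x y : L, Valued.v (x - y) ≤ ((ofAdd m : Multiplicative ℤ) : ℤₘ₀) → f x = f y}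

/-- The "annulus" `O_L^*(n) = m_L^n \ m_L^{n+1} = {x : v(x) = ofAdd(−n)}`. -/
def annulus (L : Type*) [Field L] [Valued L ℤₘ₀] (n : ℤ) : Set L :=
  {x : L | Valued.v x = ((ofAdd (-n) : Multiplicative ℤ) : ℤₘ₀)}

/-- The map `j` computed from a Haar measure `μ`:
`j(g)(n) = (1/μ(O_L^*(n))) ∫_{O_L^*(n)} g dμ`. -/
noncomputable def jmap (L : Type*) [Field L] [Valued L ℤₘ₀] [MeasurableSpace L]
    (μ : Measure L) (g : L → ℂ) (n : ℤ) : ℂ :=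
  ((μ (annulus L n)).toReal)⁻¹ • ∫ x in annulus L n, g x ∂μ

/-!
Write `A n = {v x = exp (-n)}` for the annuli. Two Haar measures agree up to a scalar on every
compact set, so `jmap` does not depend on `μ`; multiplication by a unit `r` preserves each `A n`
and pushes `μ` forward to another Haar measure, so `jmap` is invariant under `O_L^*`.

A function `g ∈ D(L)` vanishes on `A n` for `n ≪ 0` and equals `g 0` on `A n` for `n ≫ 0`, so
`jmap g ∈ D_+(ℤ)`; conversely the function equal to `c n` on `A n` is in `D(L)` and maps to `c`.
For the kernel, split `g` along the finitely many annuli it meets. On one annulus `A n`, `g` is a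
finite combination `∑ c_C 1_C` of indicators of cosets `C` of a small ball `m_L^k`. Two such
cosets `a + m_L^k`, `b + m_L^k` inside `A n` are exchanged by the unit `a / b`, so each `1_C` is
congruent to `1_{u^n + m_L^k}` modulo the span of the `h(r⁻¹ ·) - h`, and the total coefficient
`∑ c_C` is proportional to `∫_{A n} g`, which vanishes.
-/

open WithZero Topology

theorem WithZero.exp_sub_one_lt_iff {a : ℤ} {w : ℤₘ₀} :
    exp (a - 1) < w ↔ exp a ≤ w := by
  rcases eq_or_ne w 0 with rfl | hw
  · simp
  · lift w to ℤ using hw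
    rw [exp_lt_exp, exp_le_exp, Int.sub_one_lt_iff]

theorem Finset.eq_sum_indicator_of_support_subset {ι α M : Type*} [AddCommMonoid M]
    (s : Finset ι) {t : ι → Set α} (ht : (s : Set ι).PairwiseDisjoint t) {f : α → M}
    (hf : Function.support f ⊆ ⋃ i ∈ s, t i) : f = ∑ i ∈ s, (t i).indicator f := by
  rw [Finset.sum_fn, ← Finset.indicator_biUnion s t ht, Set.indicator_eq_self.mpr hf]

theorem MeasureTheory.Measure.restrict_eq_addHaarScalarFactor_smul {G : Type*} [AddGroup G]
    [TopologicalSpace G] [IsTopologicalAddGroup G] [LocallyCompactSpace G] [MeasurableSpace G]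
    [BorelSpace G] (μ' μ : Measure G) [μ.IsAddHaarMeasure] [IsFiniteMeasureOnCompacts μ']
    [μ'.IsAddLeftInvariant] {K : Set G} (hK : IsCompact K) (hK' : IsClosed K) :
    μ'.restrict K = Measure.addHaarScalarFactor μ' μ • μ.restrict K := by
  ext s hs
  rw [Measure.restrict_apply hs, Measure.smul_apply, Measure.restrict_apply hs]
  exact Measure.measure_isAddInvariant_eq_smul_of_isCompact_closure μ' μ
    (hK.of_isClosed_subset isClosed_closure (closure_minimal Set.inter_subset_right hK'))

section Valued

variable {L : Type*} [Field L] [Valued L ℤₘ₀]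

/-- The fractional ideal `m_L^(-m) = {x | v x ≤ exp m}`; note the sign, opposite to `annulus`. -/
def ballSubgroup (L : Type*) [Field L] [Valued L ℤₘ₀] (m : ℤ) : AddSubgroup L :=
  (Valued.v : Valuation L ℤₘ₀).leAddSubgroup (exp m)

theorem mem_ballSubgroup {x : L} {m : ℤ} : x ∈ ballSubgroup L m ↔ Valued.v x ≤ exp m :=
  Iff.rfl

theorem mk_ballSubgroup_eq_iff {x y : L} {m : ℤ} :
    (x : L ⧸ ballSubgroup L m) = y ↔ Valued.v (x - y) ≤ exp m := by
  rw [QuotientAddGroup.eq, mem_ballSubgroup, neg_add_eq_sub, Valuation.map_sub_swap]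

theorem preimage_mk_ballSubgroup (a : L) (m : ℤ) :
    QuotientAddGroup.mk ⁻¹' {(a : L ⧸ ballSubgroup L m)} =
      (-a + ·) ⁻¹' ballSubgroup L m := by
  ext x
  rw [Set.mem_preimage, Set.mem_singleton_iff, mk_ballSubgroup_eq_iff, Set.mem_preimage,
    SetLike.mem_coe, mem_ballSubgroup, neg_add_eq_sub]

theorem exists_ballSubgroup_subset {s : Set L} (hs : s ∈ 𝓝 0) :
    ∃ m : ℤ, (ballSubgroup L m : Set L) ⊆ s := by
  obtain ⟨γ, hγ⟩ := Valued.mem_nhds_zero.mp hs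
  set e := MonoidWithZeroHom.ValueGroup₀.embedding γ.1
  have he : e ≠ 0 := by simp [e]
  refine ⟨log e - 1, fun x hx ↦ hγ ((Valuation.restrict_lt_iff_lt_embedding _).mpr ?_)⟩
  calc Valued.v x ≤ exp (log e - 1) := hx
    _ < exp (log e) := exp_lt_exp.mpr (by omega)
    _ = e := exp_log he

theorem mem_annulus_iff {x : L} {n : ℤ} : x ∈ annulus L n ↔ Valued.v x = exp (-n) := Iff.rfl

theorem ne_zero_of_mem_annulus {x : L} {n : ℤ} (hx : x ∈ annulus L n) : x ≠ 0 := by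
  rintro rfl
  exact exp_ne_zero (hx.symm.trans (map_zero _))

theorem mem_annulus_neg_log {x : L} (hx : x ≠ 0) : x ∈ annulus L (-log (Valued.v x)) := by
  rw [mem_annulus_iff, neg_neg, exp_log ((map_ne_zero _).mpr hx)]

theorem annulus_pairwiseDisjoint (s : Set ℤ) : s.PairwiseDisjoint (annulus L) :=
  fun k _ l _ hkl ↦ Set.disjoint_left.mpr fun x hk hl ↦ hkl <| by
    simpa using (mem_annulus_iff.mp hk).symm.trans (mem_annulus_iff.mp hl)

theorem mem_annulus_congr {x y : L} {n m : ℤ} (hxy : Valued.v (x - y) ≤ exp m) (hm : m < -n) :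
    x ∈ annulus L n ↔ y ∈ annulus L n := by
  have key : ∀ {a b : L}, Valued.v (a - b) ≤ exp m →
      a ∈ annulus L n → b ∈ annulus L n :=
    fun {a b} hab ha ↦ by
      rw [mem_annulus_iff] at ha ⊢
      rw [← ha]
      refine Valuation.map_eq_of_sub_lt _ ?_
      rw [Valuation.map_sub_swap, ha]
      exact hab.trans_lt (exp_lt_exp.mpr hm)
  exact ⟨key hxy, key (by rwa [Valuation.map_sub_swap])⟩

theorem annulus_eq_diff (n : ℤ) :
    annulus L n = (ballSubgroup L (-n) : Set L) \ ballSubgroup L (-n - 1) := by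
  ext x
  simp only [mem_annulus_iff, Set.mem_sdiff, SetLike.mem_coe, mem_ballSubgroup, not_le,
    exp_sub_one_lt_iff, le_antisymm_iff]

theorem isOpen_annulus (n : ℤ) : IsOpen (annulus L n) :=
  isOpen_iff_mem_nhds.mpr fun x hx ↦ by
    have := Valued.locally_const (mem_annulus_iff.mp hx ▸ exp_ne_zero : Valued.v x ≠ 0)
    rwa [mem_annulus_iff.mp hx] at this

theorem preimage_mul_left_annulus {r : L} (hr : Valued.v r = 1) (n : ℤ) :
    (r * ·) ⁻¹' annulus L n = annulus L n := by
  ext x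
  simp only [Set.mem_preimage, mem_annulus_iff, map_mul, hr, one_mul]

theorem mem_DL_iff {g : L → ℂ} : g ∈ DL L ↔
    (∃ n : ℤ, ∀ x, g x ≠ 0 → Valued.v x ≤ exp n) ∧
      ∃ m : ℤ, ∀ x y : L, Valued.v (x - y) ≤ exp m → g x = g y :=
  Iff.rfl

open scoped Classical in
/-- The function equal to `c k` on `annulus L k`; its value `c N` at `0` is the eventual value
of `c` when `c ∈ DplusSet`, which makes it locally constant at `0`. -/
noncomputable def annulusLift (c : ℤ → ℂ) (N : ℤ) (x : L) : ℂ :=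
  if x = 0 then c N else c (-log (Valued.v x))

theorem annulusLift_of_mem_annulus {c : ℤ → ℂ} {N k : ℤ} {x : L} (hx : x ∈ annulus L k) :
    annulusLift c N x = c k := by
  simp [annulusLift, ne_zero_of_mem_annulus hx, mem_annulus_iff.mp hx]

theorem annulusLift_of_le {c : ℤ → ℂ} {N : ℤ} (hc : ∀ k, N ≤ k → c k = c N) {x : L}
    (hx : Valued.v x ≤ exp (-N)) : annulusLift c N x = c N := by
  by_cases hx0 : x = 0
  · simp [annulusLift, hx0]
  · have hk := mem_annulus_neg_log hx0
    rw [annulusLift_of_mem_annulus hk, hc]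
    rw [mem_annulus_iff.mp hk, exp_le_exp] at hx
    omega

theorem annulusLift_mem_DL {c : ℤ → ℂ} {N₀ N : ℤ} (h₀ : ∀ k ≤ N₀, c k = 0)
    (hc : ∀ k, N ≤ k → c k = c N) : annulusLift c N ∈ DL L := by
  refine mem_DL_iff.mpr ⟨⟨-N₀ - 1, fun x hx ↦ ?_⟩, ⟨-N, fun x y hxy ↦ ?_⟩⟩
  · by_cases hx0 : x = 0
    · simp [hx0]
    · have hk := mem_annulus_neg_log hx0
      rw [annulusLift_of_mem_annulus hk] at hx
      rw [mem_annulus_iff.mp hk, exp_le_exp]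
      by_contra h
      exact hx (h₀ _ (by omega))
  · by_cases hx : Valued.v x ≤ exp (-N)
    · have hy : Valued.v y ≤ exp (-N) :=
        calc Valued.v y = Valued.v (x - (x - y)) := by rw [sub_sub_cancel]
          _ ≤ max (Valued.v x) (Valued.v (x - y)) := Valuation.map_sub _ _ _
          _ ≤ exp (-N) := max_le hx hxy
      rw [annulusLift_of_le hc hx, annulusLift_of_le hc hy]
    · have hx0 : x ≠ 0 := by
        rintro rfl
        simp at hx
      have hk := mem_annulus_neg_log hx0
      have hlt : -N < -(-log (Valued.v x)) := by
        rw [mem_annulus_iff.mp hk, exp_le_exp] at hx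
        omega
      rw [annulusLift_of_mem_annulus hk,
        annulusLift_of_mem_annulus ((mem_annulus_congr hxy hlt).mp hk)]

/-- The subspace by which `D(L)` is divided to form the coinvariants `D(L)_{O_L^*}`. -/
def coinvariantsKer (L : Type*) [Field L] [Valued L ℤₘ₀] : Submodule ℂ (L → ℂ) :=
  Submodule.span ℂ {p : L → ℂ | ∃ (h : L → ℂ) (r : L),
    h ∈ DL L ∧ Valued.v r = 1 ∧ p = (fun x => h (r⁻¹ * x)) - h}

noncomputable def cosetIndicator {m : ℤ} (C : L ⧸ ballSubgroup L m) : L → ℂ :=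
  (QuotientAddGroup.mk ⁻¹' {C}).indicator 1

theorem cosetIndicator_mem_DL (b : L) (m : ℤ) :
    cosetIndicator (b : L ⧸ ballSubgroup L m) ∈ DL L := by
  classical
  refine mem_DL_iff.mpr
    ⟨⟨max m (log (Valued.v b)), fun x hx ↦ ?_⟩, ⟨m, fun x y hxy ↦ ?_⟩⟩
  · have hxb : Valued.v (x - b) ≤ exp m := mk_ballSubgroup_eq_iff.mp
      (Set.mem_of_indicator_ne_zero hx :
        x ∈ QuotientAddGroup.mk ⁻¹' {(b : L ⧸ ballSubgroup L m)})
    calc Valued.v x = Valued.v (x - b + b) := by rw [sub_add_cancel]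
      _ ≤ max (Valued.v (x - b)) (Valued.v b) := Valuation.map_add _ _ _
      _ ≤ max (exp m) (exp (log (Valued.v b))) := max_le_max hxb le_exp_log
      _ = exp (max m (log (Valued.v b))) := (Monotone.map_max fun _ _ ↦ exp_le_exp.mpr).symm
  · simp only [cosetIndicator, Set.indicator_apply, Set.mem_preimage, Set.mem_singleton_iff,
      mk_ballSubgroup_eq_iff.mpr hxy, Pi.one_apply]

theorem cosetIndicator_sub_mem_coinvariantsKer {a b : L} (hb : b ≠ 0)
    (hab : Valued.v a = Valued.v b) (m : ℤ) :
    cosetIndicator (a : L ⧸ ballSubgroup L m) - cosetIndicator (b : L ⧸ ballSubgroup L m) ∈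
      coinvariantsKer L := by
  classical
  have hr : Valued.v (a / b) = 1 := by
    rw [map_div₀, hab, div_self ((Valuation.ne_zero_iff _).mpr hb)]
  have ha : a ≠ 0 := by
    rintro rfl
    simp at hr
  refine Submodule.subset_span ⟨_, a / b, cosetIndicator_mem_DL b m, hr, ?_⟩
  congr 1
  funext x
  have hx : (a / b)⁻¹ * x - b = (a / b)⁻¹ * (x - a) := by field_simp
  simp only [cosetIndicator, Set.indicator_apply, Set.mem_preimage, Set.mem_singleton_iff,
    mk_ballSubgroup_eq_iff, hx, map_mul, Valuation.map_inv, hr, inv_one, one_mul, Pi.one_apply]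

section Uniformizer

variable {u : L} (hu : Valued.v u = exp (-1))
include hu

theorem valuation_zpow_uniformizer (k : ℤ) : Valued.v (u ^ k) = exp (-k) := by
  rw [map_zpow₀, hu, ← exp_zsmul, smul_neg, zsmul_one, Int.cast_id]

theorem zpow_mem_annulus (n : ℤ) : u ^ n ∈ annulus L n := valuation_zpow_uniformizer hu n

theorem ballSubgroup_mem_nhds (m : ℤ) : (ballSubgroup L m : Set L) ∈ 𝓝 0 := by
  have hz : Valued.v (u ^ (-m)) = exp m := by rw [valuation_zpow_uniformizer hu, neg_neg]
  have hz0 : Valued.v.restrict (u ^ (-m)) ≠ 0 := by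
    rw [Ne, Valuation.restrict_eq_zero_iff, hz]
    exact exp_ne_zero
  exact Valued.mem_nhds_zero.mpr ⟨Units.mk0 _ hz0, fun x hx ↦
    (((Valuation.restrict_lt_iff _).mp hx).trans_eq hz).le⟩

theorem isOpen_ballSubgroup (m : ℤ) : IsOpen (ballSubgroup L m : Set L) :=
  AddSubgroup.isOpen_of_mem_nhds _ (ballSubgroup_mem_nhds hu m)

theorem isClosed_ballSubgroup (m : ℤ) : IsClosed (ballSubgroup L m : Set L) :=
  AddSubgroup.isClosed_of_isOpen _ (isOpen_ballSubgroup hu m)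

theorem ballSubgroup_eq_preimage_mul (m j : ℤ) :
    (ballSubgroup L m : Set L) = (u ^ (m - j) * ·) ⁻¹' ballSubgroup L j := by
  ext x
  have hexp : exp j = exp (-(m - j)) * exp m := by rw [← exp_add]; congr 1; ring
  simp only [SetLike.mem_coe, Set.mem_preimage, mem_ballSubgroup, map_mul,
    valuation_zpow_uniformizer hu, hexp]
  exact (mul_le_mul_iff_of_pos_left (zero_lt_iff.mpr exp_ne_zero)).symm

theorem isCompact_ballSubgroup [LocallyCompactSpace L] (m : ℤ) :
    IsCompact (ballSubgroup L m : Set L) := by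
  obtain ⟨K, hK, hK0⟩ := exists_compact_mem_nhds (0 : L)
  obtain ⟨j, hj⟩ := exists_ballSubgroup_subset hK0
  have hu0 : u ^ (m - j) ≠ 0 := by
    rw [← (Valuation.ne_zero_iff Valued.v), valuation_zpow_uniformizer hu]
    exact exp_ne_zero
  rw [ballSubgroup_eq_preimage_mul hu m j, ← Homeomorph.coe_mulLeft₀ _ hu0,
    Homeomorph.isCompact_preimage]
  exact hK.of_isClosed_subset (isClosed_ballSubgroup hu j) hj

theorem isClosed_annulus (n : ℤ) : IsClosed (annulus L n) := by
  rw [annulus_eq_diff]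
  exact (isClosed_ballSubgroup hu _).sdiff (isOpen_ballSubgroup hu _)

theorem isCompact_annulus [LocallyCompactSpace L] (n : ℤ) : IsCompact (annulus L n) :=
  (isCompact_ballSubgroup hu (-n)).of_isClosed_subset (isClosed_annulus hu n)
    (annulus_eq_diff (L := L) n ▸ Set.sdiff_subset)

theorem isOpen_preimage_mk_ballSubgroup {m : ℤ} (C : L ⧸ ballSubgroup L m) :
    IsOpen (QuotientAddGroup.mk ⁻¹' {C} : Set L) := by
  obtain ⟨a, rfl⟩ := QuotientAddGroup.mk_surjective C
  rw [preimage_mk_ballSubgroup]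
  exact (isOpen_ballSubgroup hu m).preimage (continuous_const_add (-a))

theorem exists_eq_sum_smul_cosetIndicator {f : L → ℂ} {K : Set L} (hK : IsCompact K)
    {m : ℤ} (hsupp : ∀ x, f x ≠ 0 → x ∈ K)
    (hconst : ∀ x y : L, Valued.v (x - y) ≤ exp m → f x = f y) :
    ∃ S : Finset (L ⧸ ballSubgroup L m),
      f = ∑ C ∈ S, f C.out • cosetIndicator C := by
  classical
  have : DiscreteTopology (L ⧸ ballSubgroup L m) :=
    QuotientAddGroup.discreteTopology (isOpen_ballSubgroup hu m)
  have hS : (QuotientAddGroup.mk '' K : Set (L ⧸ ballSubgroup L m)).Finite :=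
    (hK.image QuotientAddGroup.continuous_mk).finite_of_discrete
  refine ⟨hS.toFinset, ?_⟩
  conv_lhs => rw [Finset.eq_sum_indicator_of_support_subset hS.toFinset
    (Set.pairwiseDisjoint_fiber QuotientAddGroup.mk _) (f := f)
    fun x hx ↦ Set.mem_biUnion (by simpa using ⟨x, hsupp x hx, rfl⟩) rfl]
  refine Finset.sum_congr rfl fun C _ ↦ funext fun x ↦ ?_
  by_cases hx : x ∈ (QuotientAddGroup.mk ⁻¹' {C} : Set L)
  · rw [Pi.smul_apply, cosetIndicator, Set.indicator_of_mem hx, Set.indicator_of_mem hx,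
      Pi.one_apply, smul_eq_mul, mul_one]
    refine hconst _ _ (mk_ballSubgroup_eq_iff.mp ?_)
    rw [QuotientAddGroup.out_eq']
    exact hx
  · simp [cosetIndicator, hx]

end Uniformizer

section Measure

variable [MeasurableSpace L]

theorem jmap_map_mul_left [BorelSpace L] (μ : Measure L) {r : L}
    (hr : Valued.v r = 1) (g : L → ℂ) :
    jmap L (μ.map (r * ·)) g = jmap L μ (fun x ↦ g (r * x)) := by
  have hr0 : r ≠ 0 := by
    rintro rfl
    simp at hr
  have he := (Homeomorph.mulLeft₀ r hr0).measurableEmbedding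
  rw [Homeomorph.coe_mulLeft₀] at he
  funext n
  rw [jmap, jmap, he.map_apply, he.setIntegral_map, preimage_mul_left_annulus hr]

theorem measure_preimage_mk_ballSubgroup [BorelSpace L] (μ : Measure L) [μ.IsAddLeftInvariant]
    {m : ℤ} (C : L ⧸ ballSubgroup L m) :
    μ (QuotientAddGroup.mk ⁻¹' {C}) = μ (ballSubgroup L m) := by
  obtain ⟨a, rfl⟩ := QuotientAddGroup.mk_surjective C
  rw [preimage_mk_ballSubgroup, measure_preimage_add]

variable [LocallyCompactSpace L] {u : L} (hu : Valued.v u = exp (-1)) (μ : Measure L)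
  [μ.IsAddHaarMeasure]
include hu

theorem measureReal_annulus_ne_zero (n : ℤ) : μ.real (annulus L n) ≠ 0 :=
  ENNReal.toReal_ne_zero.mpr
    ⟨(isOpen_annulus n).measure_ne_zero μ ⟨u ^ n, zpow_mem_annulus hu n⟩,
      (isCompact_annulus hu n).measure_lt_top.ne⟩

theorem measureReal_ballSubgroup_ne_zero (m : ℤ) : μ.real (ballSubgroup L m) ≠ 0 :=
  ENNReal.toReal_ne_zero.mpr ⟨(isOpen_ballSubgroup hu m).measure_ne_zero μ ⟨0, zero_mem _⟩,
    (isCompact_ballSubgroup hu m).measure_lt_top.ne⟩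

theorem setIntegral_annulus_eq_zero_of_jmap_eq_zero {g : L → ℂ} {n : ℤ}
    (h : jmap L μ g n = 0) :
    ∫ x in annulus L n, g x ∂μ = 0 :=
  (smul_eq_zero.mp h).resolve_left (inv_ne_zero (measureReal_annulus_ne_zero hu μ n))

variable [BorelSpace L]

theorem jmap_eq_of_forall_mem_annulus {g : L → ℂ} {c : ℂ} {n : ℤ}
    (h : ∀ x ∈ annulus L n, g x = c) : jmap L μ g n = c := by
  rw [jmap, setIntegral_congr_fun (isOpen_annulus n).measurableSet h, setIntegral_const, smul_smul,
    ← measureReal_def, inv_mul_cancel₀ (measureReal_annulus_ne_zero hu μ n), one_smul]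

theorem jmap_eq_of_isAddHaarMeasure (μ' : Measure L) [μ'.IsAddHaarMeasure] :
    jmap L μ' = jmap L μ := by
  funext g n
  have hjmap : ∀ ν : Measure L, jmap L ν g n =
      ((ν.restrict (annulus L n)) Set.univ).toReal⁻¹ •
        ∫ x, g x ∂(ν.restrict (annulus L n)) :=
    fun ν ↦ by rw [Measure.restrict_apply_univ, jmap]
  have hc : (Measure.addHaarScalarFactor μ' μ : ℝ) ≠ 0 :=
    NNReal.coe_ne_zero.mpr (Measure.addHaarScalarFactor_pos_of_isAddHaarMeasure μ' μ).ne'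
  rw [hjmap, hjmap, Measure.restrict_eq_addHaarScalarFactor_smul μ' μ (isCompact_annulus hu n)
    (isClosed_annulus hu n), Measure.smul_apply, integral_smul_nnreal_measure, ENNReal.toReal_smul,
    NNReal.smul_def, NNReal.smul_def, smul_eq_mul, smul_smul, mul_inv_rev, mul_assoc,
    inv_mul_cancel₀ hc, mul_one]

theorem jmap_comp_mul_left {r : L} (hr : Valued.v r = 1) (g : L → ℂ) :
    jmap L μ (fun x ↦ g (r * x)) = jmap L μ g := by
  have hr0 : r ≠ 0 := by
    rintro rfl
    simp at hr
  have : (μ.map (r * ·)).IsAddHaarMeasure :=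
    (ContinuousLinearEquiv.smulLeft (R₁ := L) (Units.mk0 r hr0)).isAddHaarMeasure_map μ
  rw [← jmap_map_mul_left μ hr, jmap_eq_of_isAddHaarMeasure hu μ]

theorem integral_sum_smul_cosetIndicator {m : ℤ} (S : Finset (L ⧸ ballSubgroup L m))
    (c : L ⧸ ballSubgroup L m → ℂ) :
    ∫ x, (∑ C ∈ S, c C • cosetIndicator C) x ∂μ =
      (∑ C ∈ S, c C) * μ.real (ballSubgroup L m) := by
  have hfin : μ (ballSubgroup L m) ≠ ⊤ := (isCompact_ballSubgroup hu m).measure_lt_top.ne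
  have hint : ∀ C : L ⧸ ballSubgroup L m,
      Integrable (cosetIndicator C) μ := fun C ↦
    (integrable_indicator_iff (isOpen_preimage_mk_ballSubgroup hu C).measurableSet).mpr
      (integrableOn_const (measure_preimage_mk_ballSubgroup μ C ▸ hfin))
  simp_rw [Finset.sum_apply]
  rw [integral_finsetSum S fun C _ ↦ (hint C).smul (c C), Finset.sum_mul]
  refine Finset.sum_congr rfl fun C _ ↦ ?_
  simp only [Pi.smul_apply]
  rw [integral_smul, cosetIndicator,
    integral_indicator (isOpen_preimage_mk_ballSubgroup hu C).measurableSet]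
  simp [measureReal_def, measure_preimage_mk_ballSubgroup, mul_comm]

theorem mem_coinvariantsKer_of_integral_eq_zero {f : L → ℂ} {n m : ℤ}
    (hsupp : ∀ x, f x ≠ 0 → x ∈ annulus L n)
    (hconst : ∀ x y : L, Valued.v (x - y) ≤ exp m → f x = f y) (hint : ∫ x, f x ∂μ = 0) :
    f ∈ coinvariantsKer L := by
  obtain ⟨S, hS⟩ := exists_eq_sum_smul_cosetIndicator hu (isCompact_annulus hu n) hsupp hconst
  have hsum : ∑ C ∈ S, f C.out = 0 := by
    have h := integral_sum_smul_cosetIndicator hu μ S fun C ↦ f C.out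
    rw [← hS, hint] at h
    exact (mul_eq_zero.mp h.symm).resolve_right
      (Complex.ofReal_ne_zero.mpr (measureReal_ballSubgroup_ne_zero hu μ m))
  have hf : f = ∑ C ∈ S,
      f C.out • (cosetIndicator C - cosetIndicator (↑(u ^ n) : L ⧸ ballSubgroup L m)) := by
    simp only [smul_sub, Finset.sum_sub_distrib, ← Finset.sum_smul, hsum, zero_smul, sub_zero]
    exact hS
  rw [hf]
  refine Submodule.sum_mem _ fun C _ ↦ ?_
  by_cases hC : f C.out = 0
  · rw [hC, zero_smul]
    exact zero_mem _
  · have h := cosetIndicator_sub_mem_coinvariantsKer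
      (ne_zero_of_mem_annulus (zpow_mem_annulus hu n))
      ((mem_annulus_iff.mp (hsupp _ hC)).trans (zpow_mem_annulus hu n).symm) m
    rw [QuotientAddGroup.out_eq'] at h
    exact Submodule.smul_mem _ _ h

theorem jmap_mem_DplusSet {g : L → ℂ} (hg : g ∈ DL L) : jmap L μ g ∈ DplusSet := by
  obtain ⟨⟨n₀, hsupp⟩, ⟨m, hconst⟩⟩ := mem_DL_iff.mp hg
  have hlarge : ∀ k, -m ≤ k → jmap L μ g k = g 0 := fun k hk ↦
    jmap_eq_of_forall_mem_annulus hu μ fun x hx ↦ hconst x 0 <| by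
      rw [sub_zero, mem_annulus_iff.mp hx, exp_le_exp]
      omega
  refine ⟨⟨-n₀ - 1, fun k hk ↦ jmap_eq_of_forall_mem_annulus hu μ fun x hx ↦ ?_⟩,
    ⟨-m, fun k hk ↦ by rw [hlarge k hk, hlarge (k + 1) (by omega)]⟩⟩
  by_contra hgx
  have h := hsupp x hgx
  rw [mem_annulus_iff.mp hx, exp_le_exp] at h
  omega

theorem exists_mem_DL_jmap_eq {c : ℤ → ℂ} (hc : c ∈ DplusSet) :
    ∃ g ∈ DL L, jmap L μ g = c := by
  obtain ⟨⟨N₀, hN₀⟩, ⟨N, hN⟩⟩ := hc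
  have hc_large : ∀ k, N ≤ k → c k = c N := fun k hk ↦
    Int.leInduction rfl (fun k hk ih ↦ (hN k hk).trans ih) k hk
  exact ⟨annulusLift c N, annulusLift_mem_DL hN₀ hc_large,
    funext fun k ↦ jmap_eq_of_forall_mem_annulus hu μ fun _ ↦ annulusLift_of_mem_annulus⟩

theorem mem_coinvariantsKer_of_jmap_eq_zero {g : L → ℂ} (hg : g ∈ DL L)
    (hj : jmap L μ g = 0) :
    g ∈ coinvariantsKer L := by
  obtain ⟨⟨n₀, hsupp⟩, ⟨m, hconst⟩⟩ := mem_DL_iff.mp hg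
  have hsmall : ∀ x, Valued.v x ≤ exp m → g x = 0 := fun x hx ↦ by
    have h0 : jmap L μ g (-m) = g 0 := jmap_eq_of_forall_mem_annulus hu μ fun y hy ↦
      hconst y 0 (by rw [sub_zero, mem_annulus_iff.mp hy, neg_neg])
    rw [hconst x 0 (by rwa [sub_zero]), ← h0, hj, Pi.zero_apply]
  have hcover : Function.support g ⊆ ⋃ k ∈ Finset.Icc (-n₀) (-m - 1), annulus L k := by
    intro x hx
    have hx0 : x ≠ 0 := fun h ↦ hx (hsmall x (by simp [h]))
    have hk := mem_annulus_neg_log hx0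
    have hle := hsupp x hx
    have hgt : ¬ Valued.v x ≤ exp m := fun h ↦ hx (hsmall x h)
    rw [mem_annulus_iff.mp hk, exp_le_exp] at hle hgt
    exact Set.mem_biUnion (Finset.mem_Icc.mpr ⟨by omega, by omega⟩) hk
  rw [Finset.eq_sum_indicator_of_support_subset _ (annulus_pairwiseDisjoint _) hcover]
  refine Submodule.sum_mem _ fun k hk ↦ ?_
  have hkm : m < -k := by
    rw [Finset.mem_Icc] at hk
    omega
  refine mem_coinvariantsKer_of_integral_eq_zero hu μ (n := k) (m := m)
    (fun x hx ↦ Set.mem_of_indicator_ne_zero hx) (fun x y hxy ↦ ?_) ?_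
  · classical
    simp only [Set.indicator_apply, mem_annulus_congr hxy hkm, hconst x y hxy]
  · rw [integral_indicator (isOpen_annulus k).measurableSet]
    exact setIntegral_annulus_eq_zero_of_jmap_eq_zero hu μ (congrFun hj k)

end Measure

end Valued

theorem coinvariants_iso_Dplus_general
    (L : Type*) [Field L] [Valued L ℤₘ₀]
    [MeasurableSpace L] [BorelSpace L] [LocallyCompactSpace L]
    (u : L) (hu : Valued.v u = ((ofAdd (-1 : ℤ) : Multiplicative ℤ) : ℤₘ₀))
    (μ : Measure L) [μ.IsAddHaarMeasure] :
    (∀ g ∈ DL L, jmap L μ g ∈ DplusSet) ∧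
      (∀ g ∈ DL L, ∀ r : L, Valued.v r = 1 →
        jmap L μ (fun x => g (r⁻¹ * x)) = jmap L μ g) ∧
      (∀ c ∈ DplusSet, ∃ g ∈ DL L, jmap L μ g = c) ∧
      (∀ g ∈ DL L, jmap L μ g = 0 →
        g ∈ Submodule.span ℂ {p : L → ℂ | ∃ (h : L → ℂ) (r : L),
          h ∈ DL L ∧ Valued.v r = 1 ∧ p = (fun x => h (r⁻¹ * x)) - h}) ∧
      (∀ μ' : Measure L, μ'.IsAddHaarMeasure → μ'.Regular →
        ∀ g ∈ DL L, jmap L μ' g = jmap L μ g) :=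
  ⟨fun _ hg ↦ jmap_mem_DplusSet hu μ hg,
    fun g _ r hr ↦ jmap_comp_mul_left hu μ (by rw [map_inv₀, hr, inv_one]) g,
    fun _ hc ↦ exists_mem_DL_jmap_eq hu μ hc,
    fun _ hg hj ↦ mem_coinvariantsKer_of_jmap_eq_zero hu μ hg hj,
    fun μ' _ _ g _ ↦ congrFun (jmap_eq_of_isAddHaarMeasure hu μ μ') g⟩

/-- for a one-dimensional local field `L` (complete, finite residue field)
with a nonzero Haar measure `μ` and a uniformizer `u`, the averaging map
`j : D(L)_{O_L^*} → D_+(ℤ)` is well defined on coinvariants, lands in `D_+(ℤ)`, is an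
isomorphism of `ℂ`-vector spaces (surjective, with kernel exactly the subspace spanned
by the elements `r·h − h`), and does not depend on the choice of `μ`. -/
theorem coinvariants_iso_Dplus
    (L : Type*) [Field L] [Valued L ℤₘ₀] [CompleteSpace L]
    [Finite (IsLocalRing.ResidueField (Valued.v.valuationSubring : ValuationSubring L))]
    [MeasurableSpace L] [BorelSpace L] [LocallyCompactSpace L]
    (u : L) (hu : Valued.v u = ((ofAdd (-1 : ℤ) : Multiplicative ℤ) : ℤₘ₀))
    (μ : Measure L) [μ.IsAddHaarMeasure] [μ.Regular] (hμ : μ ≠ 0) :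
    (∀ g ∈ DL L, jmap L μ g ∈ DplusSet) ∧
      (∀ g ∈ DL L, ∀ r : L, Valued.v r = 1 →
        jmap L μ (fun x => g (r⁻¹ * x)) = jmap L μ g) ∧
      (∀ c ∈ DplusSet, ∃ g ∈ DL L, jmap L μ g = c) ∧
      (∀ g ∈ DL L, jmap L μ g = 0 →
        g ∈ Submodule.span ℂ {p : L → ℂ | ∃ (h : L → ℂ) (r : L),
          h ∈ DL L ∧ Valued.v r = 1 ∧ p = (fun x => h (r⁻¹ * x)) - h}) ∧
      (∀ μ' : Measure L, μ'.IsAddHaarMeasure → μ'.Regular →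
        ∀ g ∈ DL L, jmap L μ' g = jmap L μ g) :=
  coinvariants_iso_Dplus_general L u hu μ
end

section
/- Let Γ be a free abelian group of rank 2 with fixed surjection π : Γ → Z, and extend the Γ-action to the set Γ̆ = Γ ∪ Z by γ ∘ (m,−∞) = (π(γ)+m, −∞). Fix γ ∈ Γ. For every β ∈ Γ̆ there exists a unique minimal element β^{⊥(γ)} ∈ Γ̆ among all φ ∈ Γ̆ satisfying φ ∘ β ∘ γ > 0 (with respect to the natural linear order on Γ̆), and the map β ↦ β^{⊥(γ)} is an involution of Γ̆ preserving the subset Γ. -/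
variable {Γ : Type*} [AddCommGroup Γ]

/-- The extended projection `π̆ : Γ̆ = Γ ⊔ ℤ → ℤ`: equal to `π` on `Γ` and to the
identity on the second copy of `ℤ` (the elements `(n, −∞)`). -/
def breveProj (π : Γ →+ ℤ) : Γ ⊕ ℤ → ℤ := Sum.elim π id

/-- The natural strict order on `Γ̆ = Γ ⊔ ℤ`: first compare via `π̆`; inside a fiber,
`(n, −∞)` is smaller than every `(n, p)`, and the fiber `π⁻¹(n)` is ordered by its
`ℤ`-torsor structure (via the inclusion `ι : ℤ → Γ` of the kernel of `π`). -/
def breveLT (ι : ℤ →+ Γ) (π : Γ →+ ℤ) (x y : Γ ⊕ ℤ) : Prop :=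
  breveProj π x < breveProj π y ∨
    (breveProj π x = breveProj π y ∧
      match x, y with
      | Sum.inr _, Sum.inl _ => True
      | Sum.inl a, Sum.inl b => ∃ k : ℤ, 0 < k ∧ ι k = b - a
      | _, _ => False)

/-- The commutative operation `∘` on `Γ̆ = Γ ⊔ ℤ` extending the addition of `Γ` and
the `Γ`-action, with `(n,p) ∘ (m,−∞) = (n+m,−∞)`. -/
def breveCirc (π : Γ →+ ℤ) : Γ ⊕ ℤ → Γ ⊕ ℤ → Γ ⊕ ℤ
  | Sum.inl a, Sum.inl b => Sum.inl (a + b)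
  | Sum.inl a, Sum.inr m => Sum.inr (π a + m)
  | Sum.inr n, Sum.inl b => Sum.inr (n + π b)
  | Sum.inr n, Sum.inr m => Sum.inr (n + m)

/-- `φ = β^{⊥(γ)}`: `φ` is the minimum of the set `{ψ ∈ Γ̆ : ψ ∘ β ∘ γ > 0}`. -/
def IsPerp (ι : ℤ →+ Γ) (π : Γ →+ ℤ) (γ : Γ) (β φ : Γ ⊕ ℤ) : Prop :=
  breveLT ι π (Sum.inl (0 : Γ)) (breveCirc π φ (breveCirc π β (Sum.inl γ))) ∧
    ∀ ψ : Γ ⊕ ℤ,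
      breveLT ι π (Sum.inl (0 : Γ)) (breveCirc π ψ (breveCirc π β (Sum.inl γ))) →
        φ = ψ ∨ breveLT ι π φ ψ


/-!
Translation by `d ∈ Γ` is an order automorphism of `Γ̆`, so for `δ = β ∘ γ ∈ Γ` the least `φ`
with `φ ∘ δ > 0` is the translate `ι 1 - δ` of the least positive element `ι 1` (the generator
of `ker π` in the positive direction). For `δ = (m, −∞)` the product `φ ∘ δ = (π̆ φ + m, −∞)`
only sees `π̆ φ`, and the least solution is `(1 - m, −∞)`. In both cases `β^{⊥(γ)}` is an
explicit affine expression in `β`, visibly an involution preserving `Γ`.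
-/

open Sum

section
variable (ι : ℤ →+ Γ) (π : Γ →+ ℤ)

@[simp] lemma breveProj_inl (a : Γ) : breveProj π (inl a) = π a := rfl

@[simp] lemma breveProj_inr (n : ℤ) : breveProj π (inr n) = n := rfl

lemma breveCirc_inr_right (x : Γ ⊕ ℤ) (m : ℤ) :
    breveCirc π x (inr m) = inr (breveProj π x + m) := by
  cases x <;> rfl

lemma breveCirc_breveCirc_inl_neg (x : Γ ⊕ ℤ) (d : Γ) :
    breveCirc π (breveCirc π x (inl d)) (inl (-d)) = x := by
  cases x <;> simp [breveCirc]

@[simp] lemma breveLT_inl_inl {a b : Γ} :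
    breveLT ι π (inl a) (inl b) ↔ π a < π b ∨ π a = π b ∧ ∃ k, 0 < k ∧ ι k = b - a :=
  Iff.rfl

@[simp] lemma breveLT_inl_inr {a : Γ} {n : ℤ} : breveLT ι π (inl a) (inr n) ↔ π a < n := by
  simp [breveLT]

@[simp] lemma breveLT_inr_inl {n : ℤ} {b : Γ} : breveLT ι π (inr n) (inl b) ↔ n ≤ π b := by
  simp [breveLT, le_iff_lt_or_eq]

@[simp] lemma breveLT_inr_inr {n m : ℤ} : breveLT ι π (inr n) (inr m) ↔ n < m := by
  simp [breveLT]

lemma breveLT_asymm (hι : Function.Injective ι) {x y : Γ ⊕ ℤ} (h : breveLT ι π x y) :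
    ¬ breveLT ι π y x := by
  cases x with
  | inr n => cases y <;> simp at h ⊢ <;> omega
  | inl a =>
    cases y with
    | inr m => simp at h ⊢; omega
    | inl b =>
      simp only [breveLT_inl_inl] at h ⊢
      rintro (hlt' | ⟨heq', k', hk', hba'⟩)
      · omega
      · obtain hlt | ⟨-, k, hk, hab⟩ := h
        · omega
        · have : ι (k + k') = ι 0 := by rw [map_add, hab, hba', map_zero]; abel
          have := hι this
          omega

lemma breveLT_breveCirc_inl_iff (x y : Γ ⊕ ℤ) (d : Γ) :
    breveLT ι π (breveCirc π x (inl d)) (breveCirc π y (inl d)) ↔ breveLT ι π x y := by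
  cases x <;> cases y <;> simp [breveCirc]

lemma zero_breveLT_inl_one (hπι : ∀ k, π (ι k) = 0) : breveLT ι π (inl 0) (inl (ι 1)) := by
  simpa [hπι] using ⟨1, one_pos, rfl⟩

lemma eq_or_breveLT_of_zero_breveLT (hπι : ∀ k, π (ι k) = 0) {x : Γ ⊕ ℤ}
    (hx : breveLT ι π (inl 0) x) : inl (ι 1) = x ∨ breveLT ι π (inl (ι 1)) x := by
  cases x with
  | inr n => simp_all
  | inl c =>
    simp only [breveLT_inl_inl, map_zero, sub_zero] at hx
    obtain hlt | ⟨hc, k, hk, rfl⟩ := hx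
    · exact .inr (.inl (by simpa [hπι] using hlt))
    · obtain rfl | hk1 := (show 1 ≤ k by omega).eq_or_lt
      · exact .inl rfl
      · exact .inr (.inr ⟨by simp [hπι], k - 1, by omega, by simp [map_sub]⟩)

lemma eq_or_breveLT_inr_of_le {n : ℤ} {y : Γ ⊕ ℤ} (h : n ≤ breveProj π y) :
    inr n = y ∨ breveLT ι π (inr n) y := by
  cases y with
  | inl b => exact .inr (by simpa using h)
  | inr m =>
    obtain rfl | hlt := h.eq_or_lt
    · exact .inl rfl
    · exact .inr (by simpa using hlt)

def IsLeastPosSummand (δ φ : Γ ⊕ ℤ) : Prop :=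
  breveLT ι π (inl 0) (breveCirc π φ δ) ∧
    ∀ ψ, breveLT ι π (inl 0) (breveCirc π ψ δ) → φ = ψ ∨ breveLT ι π φ ψ

lemma IsLeastPosSummand.unique (hι : Function.Injective ι) {δ φ φ' : Γ ⊕ ℤ}
    (h : IsLeastPosSummand ι π δ φ) (h' : IsLeastPosSummand ι π δ φ') : φ = φ' := by
  obtain rfl | hlt := h.2 φ' h'.1
  · rfl
  obtain rfl | hlt' := h'.2 φ h.1
  · rfl
  exact absurd hlt' (breveLT_asymm ι π hι hlt)

def leastPosSummand : Γ ⊕ ℤ → Γ ⊕ ℤ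
  | inl d => inl (ι 1 - d)
  | inr m => inr (1 - m)

lemma isLeastPosSummand_leastPosSummand (hπι : ∀ k, π (ι k) = 0) (δ : Γ ⊕ ℤ) :
    IsLeastPosSummand ι π δ (leastPosSummand ι δ) := by
  cases δ with
  | inl d =>
    have hshift : breveCirc π (leastPosSummand ι (inl d)) (inl d) = inl (ι 1) := by
      simp [leastPosSummand, breveCirc]
    refine ⟨hshift ▸ zero_breveLT_inl_one ι π hπι, fun ψ hψ => ?_⟩
    obtain heq | hlt := eq_or_breveLT_of_zero_breveLT ι π hπι hψ
    · left
      rw [← hshift] at heq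
      simpa only [breveCirc_breveCirc_inl_neg] using congrArg (breveCirc π · (inl (-d))) heq
    · right
      rwa [← hshift, breveLT_breveCirc_inl_iff] at hlt
  | inr m =>
    refine ⟨by simp [leastPosSummand, breveCirc], fun ψ hψ => ?_⟩
    rw [breveCirc_inr_right, breveLT_inl_inr, map_zero] at hψ
    exact eq_or_breveLT_inr_of_le ι π (by omega)

lemma leastPosSummand_leastPosSummand_breveCirc (β : Γ ⊕ ℤ) (γ : Γ) :
    leastPosSummand ι
        (breveCirc π (leastPosSummand ι (breveCirc π β (inl γ))) (inl γ)) = β := by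
  cases β with
  | inl b => simp only [breveCirc, leastPosSummand]; congr 1; abel
  | inr m => simp only [breveCirc, leastPosSummand]; congr 1; ring

end

theorem exists_perp_involution_general (ι : ℤ →+ Γ) (π : Γ →+ ℤ)
    (hι : Function.Injective ι)
    (hexact : ∀ a : Γ, π a = 0 ↔ ∃ k : ℤ, ι k = a) (γ : Γ) :
    (∀ β : Γ ⊕ ℤ, ∃! φ : Γ ⊕ ℤ, IsPerp ι π γ β φ) ∧
      ∃ perp : Γ ⊕ ℤ → Γ ⊕ ℤ,
        (∀ β : Γ ⊕ ℤ, IsPerp ι π γ β (perp β)) ∧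
        (∀ β : Γ ⊕ ℤ, perp (perp β) = β) ∧
        (∀ a : Γ, ∃ a' : Γ, perp (Sum.inl a) = Sum.inl a') := by
  have hπι : ∀ k, π (ι k) = 0 := fun k => (hexact _).2 ⟨k, rfl⟩
  let perp β := leastPosSummand ι (breveCirc π β (inl γ))
  -- `IsPerp ι π γ β` is by definition `IsLeastPosSummand ι π (β ∘ γ)`
  have hperp : ∀ β, IsPerp ι π γ β (perp β) :=
    fun β => isLeastPosSummand_leastPosSummand ι π hπι _
  refine ⟨fun β => ⟨perp β, hperp β, fun φ hφ => IsLeastPosSummand.unique ι π hι hφ (hperp β)⟩,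
    perp, hperp, fun β => leastPosSummand_leastPosSummand_breveCirc ι π β γ,
    fun a => ⟨ι 1 - (a + γ), rfl⟩⟩

/-- fix `γ ∈ Γ`. For every `β ∈ Γ̆` there is a unique minimal element
`β^{⊥(γ)}` among all `φ ∈ Γ̆` with `φ ∘ β ∘ γ > 0`, and the resulting map
`β ↦ β^{⊥(γ)}` is an involution of `Γ̆` preserving the subset `Γ`. -/
theorem exists_perp_involution (ι : ℤ →+ Γ) (π : Γ →+ ℤ)
    (hι : Function.Injective ι) (hπ : Function.Surjective π)
    (hexact : ∀ a : Γ, π a = 0 ↔ ∃ k : ℤ, ι k = a) (γ : Γ) :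
    (∀ β : Γ ⊕ ℤ, ∃! φ : Γ ⊕ ℤ, IsPerp ι π γ β φ) ∧
      ∃ perp : Γ ⊕ ℤ → Γ ⊕ ℤ,
        (∀ β : Γ ⊕ ℤ, IsPerp ι π γ β (perp β)) ∧
        (∀ β : Γ ⊕ ℤ, perp (perp β) = β) ∧
        (∀ a : Γ, ∃ a' : Γ, perp (Sum.inl a) = Sum.inl a') :=
  exists_perp_involution_general ι π hι hexact γ
end

section
/- The map Z⁴ → GL(4,Z) sending (a,b,c,m) to the upper unitriangular matrix with first row (1, m, a, c), second row (0, 1, b, ½b(b−1)), third row (0, 0, 1, b), fourth row (0, 0, 0, 1) is an injective group homomorphism from the extended discrete Heisenberg group G (with multiplication (a₁,b₁,c₁,m₁)(a₂,b₂,c₂,m₂) = (a₁+a₂+m₁b₂, b₁+b₂, c₁+c₂+a₁b₂+½b₂(b₂−1)m₁, m₁+m₂)) into GL(4,Z). -/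
/-- `halfbb b = ½ b (b − 1)` (an integer for `b ∈ ℤ`). -/
def halfbb (b : ℤ) : ℤ := b * (b - 1) / 2

lemma halfbb_add (b c : ℤ) : halfbb (b + c) = halfbb b + halfbb c + b * c := by
  obtain ⟨p, hp⟩ := Int.even_mul_succ_self (b - 1)
  obtain ⟨q, hq⟩ := Int.even_mul_succ_self (c - 1)
  obtain ⟨s, hs⟩ := Int.even_mul_succ_self (b + c - 1)
  have hb : b * (b - 1) = p + p := (by ring : b * (b - 1) = (b - 1) * (b - 1 + 1)).trans hp
  have hc : c * (c - 1) = q + q := (by ring : c * (c - 1) = (c - 1) * (c - 1 + 1)).trans hq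
  have hsc : (b + c) * (b + c - 1) = s + s :=
    (by ring : (b + c) * (b + c - 1) = (b + c - 1) * (b + c - 1 + 1)).trans hs
  have hb2 : halfbb b = p := by unfold halfbb; rw [hb]; omega
  have hc2 : halfbb c = q := by unfold halfbb; rw [hc]; omega
  have hsc2 : halfbb (b + c) = s := by unfold halfbb; rw [hsc]; omega
  have key : (b + c) * (b + c - 1) = b * (b - 1) + c * (c - 1) + 2 * (b * c) := by ring
  rw [hb2, hc2, hsc2]
  rw [hb, hc, hsc] at key
  linarith

/-- The extended discrete Heisenberg group `G = Heis(3,ℤ) ⋊ ℤ`, realized on the set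
`ℤ⁴` of quadruples `(a, b, c, m)` with multiplication
`(a₁,b₁,c₁,m₁)(a₂,b₂,c₂,m₂) = (a₁+a₂+m₁b₂, b₁+b₂, c₁+c₂+a₁b₂+½b₂(b₂−1)m₁, m₁+m₂)`. -/
@[ext]
structure ExtHeis where
  a : ℤ
  b : ℤ
  c : ℤ
  m : ℤ

namespace ExtHeis

instance : Mul ExtHeis :=
  ⟨fun x y =>
    ⟨x.a + y.a + x.m * y.b, x.b + y.b,
      x.c + y.c + x.a * y.b + halfbb y.b * x.m, x.m + y.m⟩⟩

instance : One ExtHeis := ⟨⟨0, 0, 0, 0⟩⟩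

instance : Inv ExtHeis :=
  ⟨fun x =>
    ⟨-x.a + x.m * x.b, -x.b,
      -x.c + x.a * x.b - x.m * x.b * x.b + halfbb x.b * x.m, -x.m⟩⟩

@[simp] lemma mul_def (x y : ExtHeis) :
    x * y = ⟨x.a + y.a + x.m * y.b, x.b + y.b,
      x.c + y.c + x.a * y.b + halfbb y.b * x.m, x.m + y.m⟩ := rfl

@[simp] lemma one_def : (1 : ExtHeis) = ⟨0, 0, 0, 0⟩ := rfl

@[simp] lemma inv_def (x : ExtHeis) :
    x⁻¹ = ⟨-x.a + x.m * x.b, -x.b,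
      -x.c + x.a * x.b - x.m * x.b * x.b + halfbb x.b * x.m, -x.m⟩ := rfl

lemma halfbb_zero : halfbb 0 = 0 := rfl

instance : Group ExtHeis where
  mul_assoc x y z := by
    ext
    · simp; ring
    · simp; ring
    · show ((x * y) * z).c = (x * (y * z)).c
      simp only [mul_def]
      rw [halfbb_add]
      ring
    · simp; ring
  one_mul x := by ext <;> simp
  mul_one x := by ext <;> simp [halfbb_zero]
  inv_mul_cancel x := by ext <;> simp <;> ring

end ExtHeis

/-- The matrix associated to an element of `ExtHeis`. -/
def heisMat (g : ExtHeis) : Matrix (Fin 4) (Fin 4) ℤ :=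
  !![1, g.m, g.a, g.c;
     0, 1, g.b, halfbb g.b;
     0, 0, 1, g.b;
     0, 0, 0, 1]

lemma heisMat_one : heisMat 1 = 1 := by
  unfold heisMat
  ext i j
  fin_cases i <;> fin_cases j <;>
    simp [Matrix.one_apply, ExtHeis.one_def, halfbb, Matrix.vecHead, Matrix.vecTail]

lemma heisMat_mul (x y : ExtHeis) : heisMat (x * y) = heisMat x * heisMat y := by
  unfold heisMat
  ext i j
  fin_cases i <;> fin_cases j <;>
    simp [Matrix.mul_apply, Fin.sum_univ_succ, ExtHeis.mul_def, halfbb_add, Matrix.vecHead, Matrix.vecTail] <;> ring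

noncomputable def heisUnit (g : ExtHeis) : Matrix.GeneralLinearGroup (Fin 4) ℤ where
  val := heisMat g
  inv := heisMat g⁻¹
  val_inv := by rw [← heisMat_mul, mul_inv_cancel, heisMat_one]
  inv_val := by rw [← heisMat_mul, inv_mul_cancel, heisMat_one]

noncomputable def heisHom : ExtHeis →* Matrix.GeneralLinearGroup (Fin 4) ℤ :=
  MonoidHom.mk' heisUnit (fun x y => by
    ext : 1
    exact heisMat_mul x y)

/-- the map sending `(a,b,c,m)` to the upper unitriangular matrix
`[[1, m, a, c], [0, 1, b, ½b(b−1)], [0, 0, 1, b], [0, 0, 0, 1]]` is an injective group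
homomorphism from the extended discrete Heisenberg group into `GL(4, ℤ)`. -/
theorem extHeis_embeds_in_GL4 :
    ∃ F : ExtHeis →* Matrix.GeneralLinearGroup (Fin 4) ℤ,
      Function.Injective F ∧
        ∀ g : ExtHeis,
          (F g : Matrix (Fin 4) (Fin 4) ℤ) =
            !![1, g.m, g.a, g.c;
               0, 1, g.b, halfbb g.b;
               0, 0, 1, g.b;
               0, 0, 0, 1] := by
  refine ⟨heisHom, ?_, fun g => rfl⟩
  intro x y h
  have h' : heisMat x = heisMat y :=
    congrArg (fun u : Matrix.GeneralLinearGroup (Fin 4) ℤ => (u : Matrix (Fin 4) (Fin 4) ℤ)) h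
  have ha := congrFun (congrFun h' 0) 2
  have hb := congrFun (congrFun h' 1) 2
  have hc := congrFun (congrFun h' 0) 3
  have hm := congrFun (congrFun h' 0) 1
  simp [heisMat] at ha hb hc hm
  ext <;> assumption
end

section
/- Let G be the extended discrete Heisenberg group on Z⁴ with multiplication (a₁,b₁,c₁,m₁)(a₂,b₂,c₂,m₂) = (a₁+a₂+m₁b₂, b₁+b₂, c₁+c₂+a₁b₂+½b₂(b₂−1)m₁, m₁+m₂). Then the center Z(G) equals {(0,0,c,0) : c ∈ Z} ≅ Z; the commutator subgroup [G,G] equals {(a,0,c,0) : a,c ∈ Z} ≅ Z ⊕ Z; and [[G,G],G] = Z(G). Consequently G/[G,G] ≅ Z ⊕ Z and [G,G]/[[G,G],G] ≅ Z, so G is nilpotent of class 3. -/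
/-!
The map `g ↦ (b, m)` is a homomorphism onto `ℤ²`, so `[G, G]` lies in its kernel
`{(a, 0, c, 0)}`, and the commutators `⁅(0,0,0,1), (0,a,0,0)⁆ = (a, 0, -½a(a+1), 0)` and
`⁅(a,0,c,0), (0,1,0,0)⁆ = (0, 0, a, 0)` generate that kernel. More generally
`⁅(a,0,c,0), h⁆ = (0, 0, a·h.b, 0)`, so `[[G, G], G]` is the line `{(0, 0, c, 0)}`, which is the
centre and the kernel of the coordinate `a` on `[G, G]`; being central, it dies at the next step
of the lower central series.
-/

open scoped commutatorElement

lemma halfbb_one : halfbb 1 = 0 := rfl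

lemma halfbb_add_halfbb_neg (b : ℤ) : halfbb b + halfbb (-b) = b * b := by
  have h := halfbb_add b (-b)
  rw [add_neg_cancel, ExtHeis.halfbb_zero] at h
  linear_combination -h

namespace ExtHeis

lemma commutatorElement_ac_left (a c : ℤ) (h : ExtHeis) :
    ⁅(⟨a, 0, c, 0⟩ : ExtHeis), h⁆ = ⟨0, 0, a * h.b, 0⟩ := by
  simp only [commutatorElement_def, mul_def, inv_def, neg_zero, halfbb_zero, mk.injEq]
  refine ⟨by ring, by ring, ?_, by ring⟩
  linear_combination h.m * halfbb_add_halfbb_neg h.b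

lemma commutatorElement_m_b (m b : ℤ) :
    ⁅(⟨0, 0, 0, m⟩ : ExtHeis), (⟨0, b, 0, 0⟩ : ExtHeis)⁆ = ⟨m * b, 0, -(m * halfbb (-b)), 0⟩ := by
  simp only [commutatorElement_def, mul_def, inv_def, neg_zero, halfbb_zero, mk.injEq]
  refine ⟨by ring, by ring, ?_, by ring⟩
  linear_combination m * halfbb_add_halfbb_neg b

def bmHom : ExtHeis →* Multiplicative (ℤ × ℤ) where
  toFun g := .ofAdd (g.b, g.m)
  map_one' := rfl
  map_mul' _ _ := rfl

lemma bmHom_surjective : Function.Surjective bmHom :=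
  fun z => ⟨⟨0, z.toAdd.1, 0, z.toAdd.2⟩, rfl⟩

lemma mem_ker_bmHom {g : ExtHeis} : g ∈ bmHom.ker ↔ g.b = 0 ∧ g.m = 0 := by
  rw [MonoidHom.mem_ker, ← toAdd_eq_zero]
  exact Prod.ext_iff

lemma commutator_eq_ker_bmHom : commutator ExtHeis = bmHom.ker := by
  refine le_antisymm (Abelianization.commutator_subset_ker bmHom) ?_
  rintro ⟨a, b, c, m⟩ hg
  obtain ⟨rfl, rfl⟩ := mem_ker_bmHom.1 hg
  have hx : ⁅(⟨0, 0, 0, 1⟩ : ExtHeis), (⟨0, a, 0, 0⟩ : ExtHeis)⁆ ∈ commutator ExtHeis :=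
    Subgroup.commutator_mem_commutator trivial trivial
  have hy : ⁅(⟨c + halfbb (-a), 0, 0, 0⟩ : ExtHeis), (⟨0, 1, 0, 0⟩ : ExtHeis)⁆ ∈
      commutator ExtHeis :=
    Subgroup.commutator_mem_commutator trivial trivial
  convert mul_mem hx hy using 1
  rw [commutatorElement_m_b, commutatorElement_ac_left]
  ext <;> simp [halfbb_zero]

lemma mem_commutator_iff (g : ExtHeis) : g ∈ commutator ExtHeis ↔ g.b = 0 ∧ g.m = 0 := by
  rw [commutator_eq_ker_bmHom, mem_ker_bmHom]

lemma mem_center_iff (g : ExtHeis) :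
    g ∈ Subgroup.center ExtHeis ↔ g.a = 0 ∧ g.b = 0 ∧ g.m = 0 := by
  rw [Subgroup.mem_center_iff]
  constructor
  · intro h
    have h_b := h ⟨0, 1, 0, 0⟩
    have h_m := h ⟨0, 0, 0, 1⟩
    simp only [mul_def, ExtHeis.ext_iff, halfbb_one, halfbb_zero] at h_b h_m
    omega
  · rintro ⟨ha, hb, hm⟩ h
    ext <;> simp [ha, hb, hm, halfbb_zero, add_comm]

lemma commutator_commutator_top_eq_center :
    ⁅commutator ExtHeis, ⊤⁆ = Subgroup.center ExtHeis := by
  apply le_antisymm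
  · rw [Subgroup.commutator_le]
    rintro ⟨a, b, c, m⟩ hg h -
    obtain ⟨rfl, rfl⟩ := (mem_commutator_iff _).1 hg
    simp [commutatorElement_ac_left, mem_center_iff]
  · rintro ⟨a, b, c, m⟩ hg
    obtain ⟨rfl, rfl, rfl⟩ := (mem_center_iff _).1 hg
    have hc : (⟨c, 0, 0, 0⟩ : ExtHeis) ∈ commutator ExtHeis := (mem_commutator_iff _).2 ⟨rfl, rfl⟩
    simpa [commutatorElement_ac_left] using
      Subgroup.commutator_mem_commutator hc (Subgroup.mem_top (⟨0, 1, 0, 0⟩ : ExtHeis))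

def aHom : commutator ExtHeis →* Multiplicative ℤ where
  toFun x := .ofAdd (x : ExtHeis).a
  map_one' := rfl
  map_mul' x y := by
    simp [((mem_commutator_iff _).1 x.2).2]

lemma aHom_surjective : Function.Surjective aHom :=
  fun n => ⟨⟨⟨n.toAdd, 0, 0, 0⟩, (mem_commutator_iff _).2 ⟨rfl, rfl⟩⟩, rfl⟩

lemma aHom_eq_one_iff (x : commutator ExtHeis) :
    aHom x = 1 ↔ (x : ExtHeis) ∈ ⁅commutator ExtHeis, (⊤ : Subgroup ExtHeis)⁆ := by
  rw [commutator_commutator_top_eq_center, mem_center_iff]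
  obtain ⟨hb, hm⟩ := (mem_commutator_iff _).1 x.2
  simp only [hb, hm, and_true]
  exact ofAdd_eq_one

lemma lowerCentralSeries_two :
    (⊤ : Subgroup ExtHeis).lowerCentralSeries 2 = Subgroup.center ExtHeis :=
  commutator_commutator_top_eq_center

lemma lowerCentralSeries_three : (⊤ : Subgroup ExtHeis).lowerCentralSeries 3 = ⊥ := by
  rw [Subgroup.lowerCentralSeries_succ, lowerCentralSeries_two]
  exact Subgroup.commutator_center_left _

lemma center_ne_bot : Subgroup.center ExtHeis ≠ ⊥ := by
  rw [Ne, Subgroup.eq_bot_iff_forall]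
  intro h
  simpa using h ⟨0, 0, 1, 0⟩ ((mem_center_iff _).2 ⟨rfl, rfl, rfl⟩)

end ExtHeis

/-- for the extended discrete Heisenberg group `G`:
the center is `{(0,0,c,0)}`; the commutator subgroup is `{(a,0,c,0)}`;
`[[G,G],G]` equals the center; `G/[G,G] ≅ ℤ ⊕ ℤ`;
`[G,G]/[[G,G],G] ≅ ℤ`; and `G` is nilpotent of class 3. -/
theorem extHeis_center_commutator_nilpotent :
    (∀ g : ExtHeis,
        g ∈ Subgroup.center ExtHeis ↔ g.a = 0 ∧ g.b = 0 ∧ g.m = 0) ∧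
      (∀ g : ExtHeis, g ∈ commutator ExtHeis ↔ g.b = 0 ∧ g.m = 0) ∧
      ⁅commutator ExtHeis, (⊤ : Subgroup ExtHeis)⁆ = Subgroup.center ExtHeis ∧
      Nonempty ((ExtHeis ⧸ commutator ExtHeis) ≃* Multiplicative (ℤ × ℤ)) ∧
      (∃ φ : (commutator ExtHeis) →* Multiplicative ℤ,
        Function.Surjective φ ∧
          ∀ x : (commutator ExtHeis),
            φ x = 1 ↔ (x : ExtHeis) ∈ ⁅commutator ExtHeis, (⊤ : Subgroup ExtHeis)⁆) ∧
      (⊤ : Subgroup ExtHeis).lowerCentralSeries 3 = ⊥ ∧ (⊤ : Subgroup ExtHeis).lowerCentralSeries 2 ≠ ⊥ := by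
  open ExtHeis in
  exact ⟨mem_center_iff, mem_commutator_iff, commutator_commutator_top_eq_center,
    ⟨(QuotientGroup.quotientMulEquivOfEq commutator_eq_ker_bmHom).trans
      (QuotientGroup.quotientKerEquivOfSurjective bmHom bmHom_surjective)⟩,
    ⟨aHom, aHom_surjective, aHom_eq_one_iff⟩, lowerCentralSeries_three,
    lowerCentralSeries_two ▸ center_ne_bot⟩
end

section
/- Fix r ∈ C^* and for each k ∈ Z let η_k be a nonzero function Z → C^* with η_k(x+a) = η_k(x)·r^{-a}, and define F_{η_k} : D_+(Z) → D_+(Z) on the basis by F_{η_k}(δ_{≥x}) = η_k(x)·δ_{≥(−x+1)} (using the involution x ↦ −x+1 on Z), together with F_{η_k^{-1}} defined analogously via η_k^{-1}(y) = η_k(y)^{-1} composed with the involution. Then F_{η_k^{-1}} ∘ F_{η_k} = id on D_+(Z), and F_{η_k}(δ_{+∞}) = η_k and F_{η_k}(η_k^{-1}) = δ_{+∞} when F_{η_k} is extended to the dual space D'_+(Z). -/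
noncomputable def deltaGe (x : ℤ) : ℤ → ℂ := fun y => if x ≤ y then 1 else 0

/-- `D_+(ℤ)` as a `ℂ`-subspace of all functions `ℤ → ℂ`. -/
noncomputable def Dplus : Submodule ℂ (ℤ → ℂ) where
  carrier := DplusSet
  zero_mem' := ⟨⟨0, fun _ _ => rfl⟩, ⟨0, fun _ _ => rfl⟩⟩
  add_mem' := by
    rintro a b ⟨⟨x0, h0⟩, ⟨x1, h1⟩⟩ ⟨⟨y0, g0⟩, ⟨y1, g1⟩⟩
    refine ⟨⟨min x0 y0, fun y hy => ?_⟩, ⟨max x1 y1, fun x hx => ?_⟩⟩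
    · show a y + b y = 0
      rw [h0 y (hy.trans (min_le_left _ _)), g0 y (hy.trans (min_le_right _ _))]
      ring
    · show a (x + 1) + b (x + 1) = a x + b x
      rw [h1 x (le_trans (le_max_left _ _) hx), g1 x (le_trans (le_max_right _ _) hx)]
  smul_mem' := by
    rintro c a ⟨⟨x0, h0⟩, ⟨x1, h1⟩⟩
    refine ⟨⟨x0, fun y hy => ?_⟩, ⟨x1, fun x hx => ?_⟩⟩
    · show c * a y = 0
      rw [h0 y hy]; ring
    · show c * a (x + 1) = c * a x
      rw [h1 x hx]

lemma deltaGe_mem (x : ℤ) : deltaGe x ∈ Dplus := by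
  refine ⟨⟨x - 1, fun y hy => ?_⟩, ⟨x, fun n hn => ?_⟩⟩
  · simp only [deltaGe]
    rw [if_neg (by omega)]
  · simp only [deltaGe]
    rw [if_pos (by omega), if_pos (by omega)]

/-- `δ_{≥x}` as an element of `D_+(ℤ)`. -/
noncomputable def deltaGeD (x : ℤ) : Dplus := ⟨deltaGe x, deltaGe_mem x⟩


private lemma Icc_insert' (a b : ℤ) (h : a ≤ b + 1) :
    Finset.Icc a (b + 1) = insert (b + 1) (Finset.Icc a b) := by
  ext x; simp [Finset.mem_Icc]; omega

private lemma tele_sum' (f : ℤ → ℂ) (a : ℤ) : ∀ b, a ≤ b →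
    ∑ x ∈ Finset.Icc (a+1) b, (f x - f (x-1)) = f b - f a := by
  refine Int.le_induction ?_ ?_
  · simp
  · intro b hb ih
    rw [Icc_insert' _ _ (by omega), Finset.sum_insert (by simp), ih]
    simp

private lemma event_const' (f : ℤ → ℂ) (x1 : ℤ) (h : ∀ x, x1 ≤ x → f (x + 1) = f x) :
    ∀ y, x1 ≤ y → f y = f x1 := by
  refine Int.le_induction ?_ ?_
  · rfl
  · intro y hy ih; rw [h y hy, ih]

private lemma deltaGe_li : LinearIndependent ℂ deltaGe := by
  rw [linearIndependent_iff']
  intro s g hsum i hi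
  have hval : ∀ y : ℤ, ∑ x ∈ s.filter (· ≤ y), g x = 0 := by
    intro y
    have h := congrFun hsum y
    rw [Finset.sum_filter]
    simp only [Finset.sum_apply, Pi.smul_apply, deltaGe, smul_eq_mul, Pi.zero_apply,
      mul_ite, mul_one, mul_zero] at h ⊢
    exact h
  have hsplit : s.filter (· ≤ i) = insert i (s.filter (· ≤ i - 1)) := by
    ext x
    simp only [Finset.mem_filter, Finset.mem_insert]
    constructor
    · rintro ⟨hx, hxi⟩
      rcases eq_or_lt_of_le hxi with h | h
      · exact Or.inl h
      · exact Or.inr ⟨hx, by omega⟩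
    · rintro (rfl | ⟨hx, hxi⟩)
      · exact ⟨hi, le_refl _⟩
      · exact ⟨hx, by omega⟩
  have h1 := hval i
  rw [hsplit, Finset.sum_insert (by simp)] at h1
  rw [hval (i - 1)] at h1
  simpa using h1

private lemma deltaGeD_li : LinearIndependent ℂ deltaGeD := by
  have hcomp : (Dplus.subtype) ∘ deltaGeD = deltaGe := rfl
  exact LinearIndependent.of_comp Dplus.subtype (by rw [hcomp]; exact deltaGe_li)

private lemma deltaGeD_span : ⊤ ≤ Submodule.span ℂ (Set.range deltaGeD) := by
  rintro ⟨f, ⟨⟨x0, h0⟩, ⟨x1, h1⟩⟩⟩ -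
  set x1' := max x1 x0 with hx1'
  have h1' : ∀ x, x1' ≤ x → f (x + 1) = f x := fun x hx => h1 x (le_trans (le_max_left _ _) hx)
  have hx01 : x0 ≤ x1' := le_max_right _ _
  have key : (⟨f, ⟨⟨x0, h0⟩, ⟨x1, h1⟩⟩⟩ : Dplus) =
      ∑ x ∈ Finset.Icc (x0 + 1) x1', (f x - f (x - 1)) • deltaGeD x := by
    apply Subtype.ext
    have hcoe : ((∑ x ∈ Finset.Icc (x0 + 1) x1', (f x - f (x - 1)) • deltaGeD x : Dplus) : ℤ → ℂ)
        = ∑ x ∈ Finset.Icc (x0 + 1) x1', (f x - f (x - 1)) • deltaGe x := by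
      push_cast
      rfl
    rw [hcoe]
    funext y
    simp only [Finset.sum_apply, Pi.smul_apply, deltaGe, smul_eq_mul, mul_ite, mul_one, mul_zero]
    rw [← Finset.sum_filter]
    by_cases hy : y ≤ x0
    · rw [h0 y hy]
      have : (Finset.Icc (x0 + 1) x1').filter (· ≤ y) = ∅ := by
        ext x; simp [Finset.mem_Icc]; omega
      rw [this, Finset.sum_empty]
    · push_neg at hy
      have hfilter : (Finset.Icc (x0 + 1) x1').filter (· ≤ y) =
          Finset.Icc (x0 + 1) (min x1' y) := by
        ext x; simp [Finset.mem_Icc]; omega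
      rw [hfilter, tele_sum' f x0 (min x1' y) (by omega), h0 x0 (le_refl _), sub_zero]
      by_cases hyx : y ≤ x1'
      · rw [min_eq_right hyx]
      · push_neg at hyx
        rw [min_eq_left (by omega), event_const' f x1' h1' y (by omega)]
  rw [key]
  exact Submodule.sum_mem _ fun x _ =>
    Submodule.smul_mem _ _ (Submodule.subset_span (Set.mem_range_self x))

noncomputable def deltaBasis : Module.Basis ℤ ℂ Dplus := Module.Basis.mk deltaGeD_li deltaGeD_span

lemma deltaBasis_apply (x : ℤ) : deltaBasis x = deltaGeD x := Module.Basis.mk_apply _ _ _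

/-- the Fourier transforms `F_η` and `F_{η⁻¹}` on `D_+(ℤ)` (determined on
the basis via the involution `x ↦ −x + 1` of `ℤ` and a function `η` with
`η(x+a) = η(x)·r^{−a}`) satisfy `F_{η⁻¹} ∘ F_η = id`; moreover, on the dual space
`D'_+(ℤ)` (where distributions are adjoints: `g ↦ g ∘ F_η`), one has
`F_η(δ_{+∞}) = η` and `F_η(η⁻¹) = δ_{+∞}` (a distribution being identified with its
values `a_{x,x}` on the basis elements `δ_{≥x}`). -/
theorem fourier_transform_on_Dplus (r : ℂ) (hr : r ≠ 0)
    (η : ℤ → ℂ) (hη0 : ∀ x : ℤ, η x ≠ 0)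
    (hηr : ∀ x a : ℤ, η (x + a) = η x * r ^ (-a)) :
    ∃ F Finv : Dplus →ₗ[ℂ] Dplus,
      (∀ x : ℤ, F (deltaGeD x) = η x • deltaGeD (-x + 1)) ∧
      (∀ y : ℤ, Finv (deltaGeD y) = (η (-y + 1))⁻¹ • deltaGeD (-y + 1)) ∧
      (∀ f : Dplus, Finv (F f) = f) ∧
      (∀ w : Dplus →ₗ[ℂ] ℂ, (∀ x : ℤ, w (deltaGeD x) = 1) →
        ∀ x : ℤ, w (F (deltaGeD x)) = η x) ∧
      (∀ g : Dplus →ₗ[ℂ] ℂ, (∀ y : ℤ, g (deltaGeD y) = (η (-y + 1))⁻¹) →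
        ∀ x : ℤ, g (F (deltaGeD x)) = 1) := by
  set F := deltaBasis.constr ℂ (fun x => η x • deltaGeD (-x + 1)) with hFdef
  set Finv := deltaBasis.constr ℂ (fun y => (η (-y + 1))⁻¹ • deltaGeD (-y + 1)) with hFinvdef
  have hF : ∀ x : ℤ, F (deltaGeD x) = η x • deltaGeD (-x + 1) := by
    intro x
    rw [← deltaBasis_apply, hFdef, Module.Basis.constr_basis]
  have hFinv : ∀ y : ℤ, Finv (deltaGeD y) = (η (-y + 1))⁻¹ • deltaGeD (-y + 1) := by
    intro y
    rw [← deltaBasis_apply, hFinvdef, Module.Basis.constr_basis]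
  refine ⟨F, Finv, hF, hFinv, ?_, ?_, ?_⟩
  · intro f
    have : Finv ∘ₗ F = LinearMap.id := by
      apply deltaBasis.ext
      intro x
      rw [LinearMap.comp_apply, deltaBasis_apply, hF, map_smul, hFinv]
      have hx : -(-x + 1) + 1 = x := by ring
      rw [hx, smul_smul, mul_inv_cancel₀ (hη0 x), one_smul, LinearMap.id_apply]
    have := LinearMap.ext_iff.mp this f
    simpa using this
  · intro w hw x
    rw [hF, map_smul, hw, smul_eq_mul, mul_one]
  · intro g hg x
    rw [hF, map_smul, hg, smul_eq_mul]
    have hx : -(-x + 1) + 1 = x := by ring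
    rw [hx, mul_inv_cancel₀ (hη0 x)]
end
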